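/- arXiv:1712.07222 — 4 statements merged into one kernel-verified Lean document; each statement's English description precedes it below -/
import Mathlib

section
/- There exists an absolute constant C₀ such that for every positive integer s there exist a positive integer v ≤ 4 log₂ s + C₀ and a function h : {0,1}^s → {0,1}^v with the property that for all x, x' ∈ {0,1}^s with x ≠ x' and h(x) = h(x'), the sets D_2(x) and D_2(x') are disjoint; consequently, any x ∈ {0,1}^s can be recovered from h(x) together with any y ∈ D_2(x). -/
/-- Delete from `x` the symbols at the positions in `S`. -/
def deleteIdxs (x : List Bool) (S : Finset ℕ) : List Bool :=
  ((List.range x.length).filter (fun i => decide (i ∉ S))).map (fun i => x.getD i false)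

/-- `w` occurs in `x` at position `i`. -/
def occursAt (w x : List Bool) (i : ℕ) : Prop := w <+: x.drop i

/-- The number of (possibly overlapping) occurrences of `w` in `x`. -/
def Nw (w x : List Bool) : ℕ :=
  ((Finset.range x.length).filter (fun i => w <+: x.drop i)).card

/-- The position in the shortened string of the junction produced by deleting position `k`. -/
def junction (S : Finset ℕ) (k : ℕ) : ℕ :=
  ((Finset.range k).filter (fun m => m ∉ S)).card

/-- `w` is preserved from `x` to `y`: some set `S` of deleted positions realizing `y`
destroys no occurrence of `w` in `x` and no occurrence of `w` in `y` spans a junction. -/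
def Preserved (w x y : List Bool) : Prop :=
  ∃ S : Finset ℕ,
    (∀ k ∈ S, k < x.length) ∧
    S.card + y.length = x.length ∧
    deleteIdxs x S = y ∧
    (∀ i, occursAt w x i → ∀ k ∈ S, ¬ (i ≤ k ∧ k < i + w.length)) ∧
    (∀ j, occursAt w y j → ∀ k ∈ S, ¬ (j < junction S k ∧ junction S k < j + w.length))

/-- `x` has a (maximal) run of length `ℓ` starting at position `i`. -/
def runAt (x : List Bool) (i ℓ : ℕ) : Prop :=
  0 < ℓ ∧ i + ℓ ≤ x.length ∧
  (∀ j, i ≤ j → j < i + ℓ → x.getD j false = x.getD i false) ∧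
  (i = 0 ∨ x.getD (i - 1) false ≠ x.getD i false) ∧
  (i + ℓ = x.length ∨ x.getD (i + ℓ) false ≠ x.getD i false)

/-- position `k` of `x` lies in a run of length `ℓ`. -/
def inRun (x : List Bool) (k ℓ : ℕ) : Prop := ∃ i, runAt x i ℓ ∧ i ≤ k ∧ k < i + ℓ

def w0000 : List Bool := [false, false, false, false]
def w1111 : List Bool := [true, true, true, true]
def w11011 : List Bool := [true, true, false, true, true]
def w110011 : List Bool := [true, true, false, false, true, true]

/-- The set of strings obtainable from `x` by deleting two symbols. -/
def D2 (x : List Bool) : Set (List Bool) :=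
  { y | ∃ i j : ℕ, i < j ∧ j < x.length ∧ y = deleteIdxs x ({i, j} : Finset ℕ) }

/-- run-length representation of the runs of ones, in order. -/
def tau1 (x : List Bool) : List ℕ :=
  ((x.splitBy (· == ·)).filter (fun r => r.headD false)).map List.length

/-- the subsequence of `tau1` of entries at least 2. -/
def tauGe2 (x : List Bool) : List ℕ := (tau1 x).filter (fun ℓ => decide (2 ≤ ℓ))

/-- sum of the odd-indexed entries. -/
def oddIdxSum (l : List ℕ) : ℕ :=
  ((Finset.range l.length).filter (fun i => i % 2 = 1)).sum (fun i => l.getD i 0)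

/-! Call two strings of length `s` confusable when their two-deletion balls meet. A confusable
partner `u` of `x` is determined by the two positions deleted from `x`, the two deleted from `u`
and the two symbols of `u` at those positions, so every string has at most `4 s⁴` partners.
A greedy colouring of the confusability graph therefore needs at most `4 s⁴ + 1 ≤ 2 ^ v` colours
with `v = 4 ⌊log₂ s⌋ + 6`, and the colour, written in `v` bits, is the hash. Within a colour
class the balls are disjoint, so `x` is the unique string with hash `h x` whose ball contains `y`.
-/

theorem junction_eq_length_filter (S : Finset ℕ) (k : ℕ) :
    junction S k = ((List.range k).filter (fun i => decide (i ∉ S))).length := by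
  rfl

theorem getD_deleteIdxs_junction {x : List Bool} {S : Finset ℕ} {k : ℕ} (hk : k < x.length)
    (hkS : k ∉ S) : (deleteIdxs x S).getD (junction S k) false = x.getD k false := by
  obtain ⟨m, hm⟩ : ∃ m, x.length = k + 1 + m := ⟨x.length - k - 1, by omega⟩
  rw [deleteIdxs, hm, List.range_add, List.range_succ, junction_eq_length_filter]
  simp [List.getD_eq_getElem?_getD, hkS]

theorem eq_of_deleteIdxs_eq {x x' : List Bool} {S : Finset ℕ} (hlen : x.length = x'.length)
    (hS : ∀ k ∈ S, x.getD k false = x'.getD k false) (h : deleteIdxs x S = deleteIdxs x' S) :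
    x = x' := by
  refine List.ext_getElem hlen fun k hk hk' => ?_
  rw [← List.getD_eq_getElem _ false, ← List.getD_eq_getElem _ false]
  by_cases hkS : k ∈ S
  · exact hS k hkS
  · rw [← getD_deleteIdxs_junction hk hkS, ← getD_deleteIdxs_junction hk' hkS, h]

namespace SimpleGraph

theorem colorable_of_forall_degree_lt {V : Type*} [Fintype V] (G : SimpleGraph V)
    [DecidableRel G.Adj] {n : ℕ} (h : ∀ v, G.degree v < n) : G.Colorable n := by
  classical
  suffices ∀ s : Finset V, ∃ f : V → ℕ, (∀ v ∈ s, f v < n) ∧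
      ∀ v ∈ s, ∀ w ∈ s, G.Adj v w → f v ≠ f w by
    obtain ⟨f, hlt, hf⟩ := this Finset.univ
    exact ⟨Coloring.mk (fun v => ⟨f v, hlt v (Finset.mem_univ v)⟩) fun hvw heq =>
      hf _ (Finset.mem_univ _) _ (Finset.mem_univ _) hvw (Fin.val_eq_of_eq heq)⟩
  intro s
  induction s using Finset.induction_on with
  | empty => exact ⟨fun _ => 0, by simp, by simp⟩
  | insert a s ha ih =>
    obtain ⟨f, hlt, hf⟩ := ih
    obtain ⟨c, hc, hcfree⟩ : ∃ c ∈ Finset.range n, c ∉ (G.neighborFinset a).image f :=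
      Finset.exists_mem_notMem_of_card_lt_card <| by
        simpa using Finset.card_image_le.trans_lt (h a)
    have hnbr : ∀ w, G.Adj a w → f w ≠ c := fun w haw hwc =>
      hcfree (Finset.mem_image.2 ⟨w, (G.mem_neighborFinset a w).2 haw, hwc⟩)
    refine ⟨Function.update f a c, ?_, ?_⟩
    · intro v hv
      rcases Finset.mem_insert.1 hv with rfl | hv
      · simpa using hc
      · rw [Function.update_of_ne (ne_of_mem_of_not_mem hv ha)]
        exact hlt v hv
    · intro v hv w hw hvw
      rcases Finset.mem_insert.1 hv with rfl | hv <;> rcases Finset.mem_insert.1 hw with rfl | hw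
      · exact absurd hvw G.irrefl
      · rw [Function.update_self, Function.update_of_ne (G.ne_of_adj hvw).symm]
        exact (hnbr w hvw).symm
      · rw [Function.update_self, Function.update_of_ne (G.ne_of_adj hvw)]
        exact hnbr v hvw.symm
      · rw [Function.update_of_ne (ne_of_mem_of_not_mem hv ha),
          Function.update_of_ne (ne_of_mem_of_not_mem hw ha)]
        exact hf v hv w hw hvw

end SimpleGraph

def d2ConfusabilityGraph (s : ℕ) : SimpleGraph (List.Vector Bool s) where
  Adj x x' := x ≠ x' ∧ (D2 x.toList ∩ D2 x'.toList).Nonempty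
  symm := ⟨fun _ _ h => ⟨h.1.symm, Set.inter_comm (α := List Bool) _ _ ▸ h.2⟩⟩
  loopless := ⟨fun _ h => h.1 rfl⟩

@[simp]
theorem d2ConfusabilityGraph_adj {s : ℕ} {x x' : List.Vector Bool s} :
    (d2ConfusabilityGraph s).Adj x x' ↔ x ≠ x' ∧ (D2 x.toList ∩ D2 x'.toList).Nonempty :=
  Iff.rfl

theorem degree_d2ConfusabilityGraph_le (s : ℕ) [DecidableRel (d2ConfusabilityGraph s).Adj]
    (x : List.Vector Bool s) : (d2ConfusabilityGraph s).degree x ≤ 4 * s ^ 4 := by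
  classical
  let T := (Finset.range s ×ˢ Finset.range s) ×ˢ (Finset.range s ×ˢ Finset.range s) ×ˢ
    (Finset.univ : Finset (Bool × Bool))
  let fiber (p : (ℕ × ℕ) × (ℕ × ℕ) × Bool × Bool) : Finset (List.Vector Bool s) :=
    Finset.univ.filter fun u => deleteIdxs u.toList {p.2.1.1, p.2.1.2} =
      deleteIdxs x.toList {p.1.1, p.1.2} ∧
      u.toList.getD p.2.1.1 false = p.2.2.1 ∧ u.toList.getD p.2.1.2 false = p.2.2.2
  -- A neighbour `u` is pinned down by the positions `i', j'` of `x` and `i, j` of `u` whose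
  -- deletion gives the common subsequence, together with the deleted symbols `u[i], u[j]`.
  have hcover : (d2ConfusabilityGraph s).neighborFinset x ⊆ T.biUnion fiber := by
    intro u hu
    obtain ⟨-, y, ⟨i', j', hij', hj', rfl⟩, ⟨i, j, hij, hj, hy⟩⟩ :=
      d2ConfusabilityGraph_adj.1 (((d2ConfusabilityGraph s).mem_neighborFinset x u).1 hu)
    simp only [List.Vector.toList_length] at hj hj'
    refine Finset.mem_biUnion.2 ⟨((i', j'), (i, j), (u.toList.getD i false,
      u.toList.getD j false)), ?_, ?_⟩
    · simp only [T, Finset.mem_product, Finset.mem_range, Finset.mem_univ, and_true]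
      omega
    · simp [fiber, hy]
  have hfiber : ∀ p ∈ T, (fiber p).card ≤ 1 := by
    intro p _
    refine Finset.card_le_one.2 fun u hu u' hu' => List.Vector.eq _ _ ?_
    simp only [fiber, Finset.mem_filter, Finset.mem_univ, true_and] at hu hu'
    refine eq_of_deleteIdxs_eq (by simp) (fun k hk => ?_) (hu.1.trans hu'.1.symm)
    rcases Finset.mem_insert.1 hk with rfl | hk
    · exact hu.2.1.trans hu'.2.1.symm
    · rw [Finset.mem_singleton.1 hk]
      exact hu.2.2.trans hu'.2.2.symm
  calc (d2ConfusabilityGraph s).degree x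
      = ((d2ConfusabilityGraph s).neighborFinset x).card := rfl
    _ ≤ (T.biUnion fiber).card := Finset.card_le_card hcover
    _ ≤ T.card * 1 := Finset.card_biUnion_le_card_mul _ _ _ hfiber
    _ = 4 * s ^ 4 := by
      simp only [T, Finset.card_product, Finset.card_range, Finset.card_univ, Fintype.card_prod,
        Fintype.card_bool]
      ring

theorem exists_decoder_of_inter_eq_empty {α β γ : Type*} [Nonempty α] {P : α → Prop}
    {h : α → β} {ball : α → Set γ}
    (hdisj : ∀ x x', P x → P x' → x ≠ x' → h x = h x' → ball x ∩ ball x' = ∅) :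
    ∃ dec : β → γ → α, ∀ x, P x → ∀ y ∈ ball x, dec (h x) y = x := by
  refine ⟨fun c y => Classical.epsilon fun z => P z ∧ h z = c ∧ y ∈ ball z, fun x hx y hy => ?_⟩
  obtain ⟨hz, hzx, hyz⟩ := Classical.epsilon_spec (p := fun z => P z ∧ h z = h x ∧ y ∈ ball z)
    ⟨x, hx, rfl, hy⟩
  by_contra hne
  exact (hdisj _ _ hz hx hne hzx).subset ⟨hyz, hy⟩

theorem four_mul_pow_four_lt_two_pow (s : ℕ) : 4 * s ^ 4 < 2 ^ (4 * Nat.log 2 s + 6) := by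
  have hs : s ^ 4 < (2 ^ (Nat.log 2 s + 1)) ^ 4 :=
    Nat.pow_lt_pow_left (Nat.lt_pow_succ_log_self one_lt_two s) four_ne_zero
  calc 4 * s ^ 4 < 4 * (2 ^ (Nat.log 2 s + 1)) ^ 4 := by omega
    _ = 2 ^ (4 * Nat.log 2 s + 6) := by ring

/-- There is a hash `h : {0,1}^s → {0,1}^v` with `v ≤ 4 log₂ s + C₀` such that distinct
strings with the same hash have disjoint two-deletion balls; consequently any `x` can be
recovered from `h x` together with any `y ∈ D2 x`. -/
theorem hash_for_two_deletions :
    ∃ C₀ : ℝ, ∀ s : ℕ, 0 < s →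
      ∃ v : ℕ, 0 < v ∧ (v : ℝ) ≤ 4 * Real.logb 2 s + C₀ ∧
        ∃ h : List Bool → (Fin v → Bool),
          (∀ x x' : List Bool, x.length = s → x'.length = s → x ≠ x' → h x = h x' →
            D2 x ∩ D2 x' = ∅) ∧
          ∃ dec : (Fin v → Bool) → List Bool → List Bool,
            ∀ x : List Bool, x.length = s → ∀ y ∈ D2 x, dec (h x) y = x := by
  classical
  refine ⟨6, fun s _ => ?_⟩
  set v := 4 * Nat.log 2 s + 6
  have hcol : (d2ConfusabilityGraph s).Colorable (2 ^ v) :=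
    (d2ConfusabilityGraph s).colorable_of_forall_degree_lt fun x =>
      (degree_d2ConfusabilityGraph_le s x).trans_lt (four_mul_pow_four_lt_two_pow s)
  let C : (d2ConfusabilityGraph s).Coloring (Fin v → Bool) := hcol.toColoring (by simp)
  let h : List Bool → Fin v → Bool := fun x =>
    if hx : x.length = s then C ⟨x, hx⟩ else fun _ => false
  have hdisj : ∀ x x' : List Bool, x.length = s → x'.length = s → x ≠ x' → h x = h x' →
      D2 x ∩ D2 x' = ∅ := by
    intro x x' hx hx' hne hxx'
    simp only [h, dif_pos hx, dif_pos hx'] at hxx'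
    by_contra hinter
    have hadj : (d2ConfusabilityGraph s).Adj ⟨x, hx⟩ ⟨x', hx'⟩ :=
      ⟨fun e => hne (congrArg Subtype.val e), Set.nonempty_iff_ne_empty.2 hinter⟩
    exact C.valid hadj hxx'
  have hv : (v : ℝ) ≤ 4 * Real.logb 2 s + 6 := by
    have : (Nat.log 2 s : ℝ) ≤ Real.logb 2 s := by simpa using Real.natLog_le_logb s 2
    push_cast [v]
    linarith
  exact ⟨v, by omega, hv, h, hdisj, exists_decoder_of_inter_eq_empty hdisj⟩
end

section
/- Let x be a binary string and let y be obtained from x by deleting a single symbol 0 that constitutes a run of length 1 in x. If this deletion destroys an occurrence of 11011 (the deleted position lies inside an occurrence of 11011 in x) or creates an occurrence of 11011 (some occurrence of 11011 in y spans the deletion junction), and moreover the deletion creates an occurrence of 1111, then the string 110011 is preserved from x to y. -/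
theorem List.getD_eraseIdx_of_lt {α : Type*} (l : List α) (d : α) {k m : ℕ} (h : m < k) :
    (l.eraseIdx k).getD m d = l.getD m d := by
  simp only [List.getD_eq_getElem?_getD, List.getElem?_eraseIdx_of_lt h]

theorem List.getD_eraseIdx_of_le {α : Type*} (l : List α) (d : α) {k m : ℕ} (h : k ≤ m) :
    (l.eraseIdx k).getD m d = l.getD (m + 1) d := by
  simp only [List.getD_eq_getElem?_getD, List.getElem?_eraseIdx_of_ge h]

theorem List.drop_eraseIdx_of_le {α : Type*} (l : List α) {i k : ℕ} (h : i ≤ k) :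
    (l.eraseIdx k).drop i = (l.drop i).eraseIdx (k - i) := by
  apply List.ext_getElem?
  intro m
  simp only [List.getElem?_drop, List.getElem?_eraseIdx]
  split_ifs <;> first | omega | congr 1

theorem occursAt.getD_eq {w x : List Bool} {i t m : ℕ} (h : occursAt w x i)
    (ht : t < w.length) (hm : i + t = m) : x.getD m false = w.getD t false := by
  subst hm
  rw [List.getD_eq_getElem?_getD, List.getD_eq_getElem?_getD, ← List.getElem?_drop,
    List.prefix_iff_getElem?.mp h t ht, List.getElem?_eq_getElem ht]

theorem occursAt.eraseIdx {w x : List Bool} {i k : ℕ} (h : occursAt w x i) (hik : i ≤ k) :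
    occursAt (w.eraseIdx (k - i)) (x.eraseIdx k) i := by
  rw [occursAt, List.drop_eraseIdx_of_le x hik]
  exact List.IsPrefix.eraseIdx h (k - i)

theorem deleteIdxs_singleton (x : List Bool) (k : ℕ) : deleteIdxs x {k} = x.eraseIdx k := by
  have hfilter : (List.range x.length).filter (fun i => decide (i ∉ ({k} : Finset ℕ))) =
      (List.range x.length).erase k := by
    rw [List.Nodup.erase_eq_filter List.nodup_range]
    exact List.filter_congr fun i _ => by by_cases i = k <;> simp_all
  rw [deleteIdxs, hfilter, List.erase_range]
  apply List.ext_getElem?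
  intro m
  rw [List.getElem?_eraseIdx]
  simp only [List.getElem?_map, List.getElem?_append, List.length_range]
  split_ifs <;> grind [List.getElem?_range', List.getElem?_range]

theorem junction_singleton (k : ℕ) : junction {k} k = k := by
  rw [junction, Finset.filter_true_of_mem (by simp; omega), Finset.card_range]

theorem preserved_eraseIdx {w x : List Bool} {k : ℕ} (hk : k < x.length)
    (hx : ∀ i, occursAt w x i → ¬ (i ≤ k ∧ k < i + w.length))
    (hy : ∀ j, occursAt w (x.eraseIdx k) j → ¬ (j < k ∧ k < j + w.length)) :
    Preserved w x (x.eraseIdx k) := by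
  refine ⟨{k}, by simpa, ?_, deleteIdxs_singleton x k, fun i hi k' hk' => ?_,
    fun j hj k' hk' => ?_⟩
  · rw [Finset.card_singleton, List.length_eraseIdx_of_lt hk]
    omega
  · rw [Finset.mem_singleton.mp hk']
    exact hx i hi
  · rw [Finset.mem_singleton.mp hk', junction_singleton]
    exact hy j hj

theorem getD_eq_true_of_occursAt_w1111 {y : List Bool} {j m : ℕ} (h : occursAt w1111 y j)
    (hjm : j ≤ m) (hmj : m < j + 4) : y.getD m false = true := by
  have hones : ∀ t < 4, w1111.getD t false = true := by decide
  rw [h.getD_eq (t := m - j) (by simp [w1111]; omega) (by omega)]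
  exact hones _ (by omega)

theorem eq_add_two_of_occursAt_w11011 {x : List Bool} {i k : ℕ} (h : occursAt w11011 x i)
    (hik : i ≤ k) (hki : k < i + 5) (h0 : x.getD k false = false) : k = i + 2 := by
  have hzero : ∀ t < 5, w11011.getD t false = false → t = 2 := by decide
  have := hzero (k - i) (by omega)
    ((h.getD_eq (m := k) (by simp [w11011]; omega) (by omega)).symm.trans h0)
  omega

theorem eq_add_one_or_eq_add_four_of_occursAt_w11011 {y : List Bool} {j k : ℕ}
    (h : occursAt w11011 y j) (hjk : j < k) (hkj : k < j + 5)
    (hl : y.getD (k - 1) false = true) (hr : y.getD k false = true) :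
    k = j + 1 ∨ k = j + 4 := by
  have hpairs : ∀ t < 5, 0 < t → w11011.getD (t - 1) false = true →
      w11011.getD t false = true → t = 1 ∨ t = 4 := by decide
  have := hpairs (k - j) (by omega) (by omega)
    ((h.getD_eq (m := k - 1) (by simp [w11011]; omega) (by omega)).symm.trans hl)
    ((h.getD_eq (m := k) (by simp [w11011]; omega) (by omega)).symm.trans hr)
  omega

theorem eq_add_one_or_eq_add_five_of_occursAt_w110011 {y : List Bool} {j k : ℕ}
    (h : occursAt w110011 y j) (hjk : j < k) (hkj : k < j + 6)
    (hl : y.getD (k - 1) false = true) (hr : y.getD k false = true) :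
    k = j + 1 ∨ k = j + 5 := by
  have hpairs : ∀ t < 6, 0 < t → w110011.getD (t - 1) false = true →
      w110011.getD t false = true → t = 1 ∨ t = 5 := by decide
  have := hpairs (k - j) (by omega) (by omega)
    ((h.getD_eq (m := k - 1) (by simp [w110011]; omega) (by omega)).symm.trans hl)
    ((h.getD_eq (m := k) (by simp [w110011]; omega) (by omega)).symm.trans hr)
  omega

theorem not_occursAt_w110011_of_isolated_zero {x : List Bool} {i k : ℕ}
    (h : occursAt w110011 x i) (hik : i ≤ k) (hki : k < i + 6)
    (hl : x.getD (k - 1) false = true) (h0 : x.getD k false = false)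
    (hr : x.getD (k + 1) false = true) : False := by
  have hzeros : ∀ t < 6, w110011.getD t false = false →
      (0 < t ∧ w110011.getD (t - 1) false = false) ∨
      (t + 1 < 6 ∧ w110011.getD (t + 1) false = false) := by decide
  rcases hzeros (k - i) (by omega)
      ((h.getD_eq (m := k) (by simp [w110011]; omega) (by omega)).symm.trans h0)
    with ⟨hpos, hz⟩ | ⟨hlt, hz⟩
  · exact Bool.noConfusion
      (hl.symm.trans ((h.getD_eq (by simp [w110011]; omega) (by omega)).trans hz))
  · exact Bool.noConfusion
      (hr.symm.trans ((h.getD_eq (by simp [w110011]; omega) (by omega)).trans hz))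

theorem not_occursAt_w110011_across_junction {y : List Bool} {k j₀ j : ℕ}
    (h1111 : occursAt w1111 y j₀) (hj₀k : j₀ < k) (hkj₀ : k < j₀ + 4)
    (h11011 : (∃ i, occursAt w1111 y i ∧ i + 2 = k) ∨
      ∃ j', occursAt w11011 y j' ∧ j' < k ∧ k < j' + 5)
    (h : occursAt w110011 y j) (hjk : j < k) (hkj : k < j + 6) : False := by
  have one (m : ℕ) (h₁ : j₀ ≤ m) (h₂ : m < j₀ + 4) : y.getD m false = true :=
    getD_eq_true_of_occursAt_w1111 h1111 h₁ h₂
  have hl := one (k - 1) (by omega) (by omega)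
  have hr := one k (by omega) hkj₀
  have h₂ : y.getD (j + 2) false = false := h.getD_eq (t := 2) (by decide) rfl
  have h₃ : y.getD (j + 3) false = false := h.getD_eq (t := 3) (by decide) rfl
  rcases eq_add_one_or_eq_add_five_of_occursAt_w110011 h hjk hkj hl hr with rfl | rfl
  · have hj₀ : j₀ + 2 = j := by
      by_contra
      exact ne_true_of_eq_false h₂ (one (j + 2) (by omega) (by omega))
    rcases h11011 with ⟨i, hi, hik⟩ | ⟨j', hj', hj'k, hkj'⟩
    · exact ne_true_of_eq_false h₂ (getD_eq_true_of_occursAt_w1111 hi (by omega) (by omega))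
    · rcases eq_add_one_or_eq_add_four_of_occursAt_w11011 hj' hj'k hkj' hl hr with hk | hk
      · exact ne_true_of_eq_false h₃ (hj'.getD_eq (t := 3) (by decide) (by omega))
      · exact ne_true_of_eq_false (hj'.getD_eq (t := 2) (by decide) (by omega))
          (one (j - 1) (by omega) (by omega))
  · have hj₀ : j₀ = j + 4 := by
      by_contra
      exact ne_true_of_eq_false h₃ (one (j + 3) (by omega) (by omega))
    rcases h11011 with ⟨i, hi, hik⟩ | ⟨j', hj', hj'k, hkj'⟩
    · exact ne_true_of_eq_false h₃ (getD_eq_true_of_occursAt_w1111 hi (by omega) (by omega))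
    · rcases eq_add_one_or_eq_add_four_of_occursAt_w11011 hj' hj'k hkj' hl hr with hk | hk
      · exact ne_true_of_eq_false (hj'.getD_eq (t := 2) (by decide) (by omega))
          (one (j + 6) (by omega) (by omega))
      · exact ne_true_of_eq_false h₂ (hj'.getD_eq (t := 1) (by decide) (by omega))

theorem claim_if11011_general (x y : List Bool) (k : ℕ)
    (hval : x.getD k false = false)
    (hy : y = deleteIdxs x ({k} : Finset ℕ))
    (h11011 : (∃ i, occursAt w11011 x i ∧ i ≤ k ∧ k < i + w11011.length) ∨
      (∃ j, occursAt w11011 y j ∧ j < k ∧ k < j + w11011.length))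
    (h1111created : ∃ j, occursAt w1111 y j ∧ j < k ∧ k < j + w1111.length) :
    Preserved w110011 x y := by
  rw [deleteIdxs_singleton] at hy
  subst hy
  obtain ⟨j₀, h1111, hj₀k, hkj₀ : k < j₀ + 4⟩ := h1111created
  have hl := getD_eq_true_of_occursAt_w1111 h1111 (m := k - 1) (by omega) (by omega)
  have hr := getD_eq_true_of_occursAt_w1111 h1111 (m := k) (by omega) hkj₀
  have hk : k < x.length := by
    by_contra hk
    rw [List.eraseIdx_of_length_le (by omega)] at hr
    exact ne_true_of_eq_false hval hr
  refine preserved_eraseIdx hk (fun i hi ⟨hik, hki⟩ => ?_) (fun j hj ⟨hjk, hkj⟩ => ?_)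
  · rw [List.getD_eraseIdx_of_lt _ _ (by omega)] at hl
    rw [List.getD_eraseIdx_of_le _ _ le_rfl] at hr
    exact not_occursAt_w110011_of_isolated_zero hi hik hki hl hval hr
  · refine not_occursAt_w110011_across_junction h1111 hj₀k hkj₀ ?_ hj hjk hkj
    rcases h11011 with ⟨i, hi, hik, hki⟩ | hcreated
    · have hki : k = i + 2 := eq_add_two_of_occursAt_w11011 hi hik hki hval
      have hi' := hi.eraseIdx hik
      rw [show k - i = 2 by omega] at hi'
      exact .inl ⟨i, hi', hki.symm⟩
    · exact .inr hcreated

/-- If deleting a `0` that constitutes a run of length 1 creates or destroys a `11011`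
and creates a `1111`, then `110011` is preserved. -/
theorem claim_if11011 (x y : List Bool) (k : ℕ) (hk : k < x.length)
    (hval : x.getD k false = false) (hrun : runAt x k 1)
    (hy : y = deleteIdxs x ({k} : Finset ℕ))
    (h11011 : (∃ i, occursAt w11011 x i ∧ i ≤ k ∧ k < i + w11011.length) ∨
      (∃ j, occursAt w11011 y j ∧ j < k ∧ k < j + w11011.length))
    (h1111created : ∃ j, occursAt w1111 y j ∧ j < k ∧ k < j + w1111.length) :
    Preserved w110011 x y :=
  claim_if11011_general x y k hval hy h11011 h1111created
end

section
/- Let y be obtained from a binary string x by deleting two symbols both equal to 1. If N_{0000}(x) ≡ N_{0000}(y) (mod 7), then the string 0000 is preserved from x to y. (In particular, the deletion of a single 1 can create at most 3 new occurrences of 0000 and can destroy none.) -/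
/-!
Deleting ones destroys no occurrence of `0000`. Away from the two junctions the shortened string
`y` is `x` shifted, so the occurrences of `0000` in `y` that straddle no junction correspond
bijectively to those in `x`, and `N₀₀₀₀(y) = N₀₀₀₀(x) + s` with `s` the number of occurrences
straddling a junction. At most three windows of length four straddle each of the two junctions,
so `0 ≤ s ≤ 6 < 7` and the congruence forces `s = 0`.
-/

section Occurrences

theorem occursAt_iff_getD {w z : List Bool} {i : ℕ} :
    occursAt w z i ↔
      w.length ≤ z.length - i ∧ ∀ t < w.length, z.getD (i + t) false = w.getD t false := by
  rw [occursAt, List.prefix_iff_getElem]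
  constructor
  · rintro ⟨hlen, h⟩
    rw [List.length_drop] at hlen
    refine ⟨by omega, fun t ht => ?_⟩
    rw [List.getD_eq_getElem _ _ (by omega), List.getD_eq_getElem _ _ ht, h t ht, List.getElem_drop]
  · rintro ⟨hlen, h⟩
    refine ⟨by rw [List.length_drop]; omega, fun t ht => ?_⟩
    have := h t ht
    rw [List.getD_eq_getElem _ _ (by omega), List.getD_eq_getElem _ _ ht] at this
    rw [List.getElem_drop, this]

theorem getD_eq_false_of_occursAt_replicate {ℓ : ℕ} {z : List Bool} {i k : ℕ}
    (h : occursAt (List.replicate ℓ false) z i) (hik : i ≤ k) (hki : k < i + ℓ) :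
    z.getD k false = false := by
  have := (occursAt_iff_getD.1 h).2 (k - i) (by simp only [List.length_replicate]; omega)
  rw [Nat.add_sub_cancel' hik] at this
  rw [this, List.getD_replicate _ (by omega)]

def occurrences (w z : List Bool) : Finset ℕ :=
  (Finset.range z.length).filter (fun i => w <+: z.drop i)

theorem Nw_eq_card_occurrences (w z : List Bool) : Nw w z = (occurrences w z).card := rfl

theorem mem_occurrences {w z : List Bool} (hw : w ≠ []) {i : ℕ} :
    i ∈ occurrences w z ↔ occursAt w z i := by
  refine ⟨fun h => (Finset.mem_filter.1 h).2, fun h => Finset.mem_filter.2 ⟨?_, h⟩⟩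
  have := (occursAt_iff_getD.1 h).1
  have := List.length_pos_iff.2 hw
  rw [Finset.mem_range]
  omega

end Occurrences

section PairDeletion

variable {k₁ k₂ : ℕ}

def pairShift (k₁ k₂ m : ℕ) : ℕ :=
  if m < k₁ then m else if m + 1 < k₂ then m + 1 else m + 2

theorem pairShift_le (k₁ k₂ m : ℕ) : pairShift k₁ k₂ m ≤ m + 2 := by
  unfold pairShift; split_ifs <;> omega

theorem pairShift_injective (k₁ k₂ : ℕ) : Function.Injective (pairShift k₁ k₂) := by
  intro a b h
  unfold pairShift at h; split_ifs at h <;> omega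

theorem filter_range_not_mem_pair {n : ℕ} (h12 : k₁ < k₂) (h2 : k₂ < n) :
    (List.range n).filter (fun i => decide (i ∉ ({k₁, k₂} : Finset ℕ))) =
      List.range' 0 k₁ ++ List.range' (k₁ + 1) (k₂ - k₁ - 1) ++
        List.range' (k₂ + 1) (n - k₂ - 1) := by
  have hsplit : List.range n = List.range' 0 k₁ ++ [k₁] ++ List.range' (k₁ + 1) (k₂ - k₁ - 1) ++
      [k₂] ++ List.range' (k₂ + 1) (n - k₂ - 1) := by
    have hk₂ : k₁ + 1 + (k₂ - k₁ - 1) = k₂ := by omega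
    rw [List.range_eq_range']
    conv_lhs => rw [show n = k₁ + 1 + (k₂ - k₁ - 1) + 1 + (n - k₂ - 1) by omega]
    rw [← List.range'_append_1, ← List.range'_append_1, ← List.range'_append_1,
      ← List.range'_append_1]
    simp only [List.range'_one, zero_add, hk₂]
  rw [hsplit]
  simp only [List.filter_append, List.filter_cons, List.filter_nil, Finset.mem_insert,
    Finset.mem_singleton, true_or, or_true, not_true_eq_false, decide_false,
    Bool.false_eq_true, if_false, List.append_nil]
  congr 2 <;> rw [List.filter_eq_self] <;> intro m hm <;> simp only [List.mem_range'_1] at hm <;>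
    simp only [decide_eq_true_eq] <;> omega

theorem length_deleteIdxs_pair {x : List Bool} (h12 : k₁ < k₂) (h2 : k₂ < x.length) :
    (deleteIdxs x {k₁, k₂}).length = x.length - 2 := by
  rw [deleteIdxs, filter_range_not_mem_pair h12 h2]
  simp only [List.length_map, List.length_append, List.length_range']
  omega

theorem getD_deleteIdxs_pair {x : List Bool} {m : ℕ} (h12 : k₁ < k₂) (h2 : k₂ < x.length)
    (hm : m < x.length - 2) :
    (deleteIdxs x {k₁, k₂}).getD m false = x.getD (pairShift k₁ k₂ m) false := by
  rw [List.getD_eq_getElem _ _ (by rw [length_deleteIdxs_pair h12 h2]; exact hm)]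
  simp only [deleteIdxs, filter_range_not_mem_pair h12 h2, List.getElem_map]
  congr 1
  simp only [List.getElem_append, List.getElem_range', List.length_append, List.length_range']
  unfold pairShift
  split_ifs <;> omega

theorem junction_pair_left (h12 : k₁ < k₂) : junction {k₁, k₂} k₁ = k₁ := by
  rw [junction, Finset.filter_true_of_mem, Finset.card_range]
  intro m hm
  simp only [Finset.mem_range] at hm
  simp only [Finset.mem_insert, Finset.mem_singleton]
  omega

theorem junction_pair_right (h12 : k₁ < k₂) : junction {k₁, k₂} k₂ = k₂ - 1 := by
  have : (Finset.range k₂).filter (fun m => m ∉ ({k₁, k₂} : Finset ℕ)) =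
      (Finset.range k₂).erase k₁ := by
    ext m
    simp only [Finset.mem_filter, Finset.mem_erase, Finset.mem_range, Finset.mem_insert,
      Finset.mem_singleton]
    omega
  rw [junction, this, Finset.card_erase_of_mem (Finset.mem_range.2 h12), Finset.card_range]

/-- The window `[j, j + ℓ)` of `deleteIdxs x {k₁, k₂}` contains both sides of a junction. -/
def Straddles (ℓ k₁ k₂ j : ℕ) : Prop :=
  (j < k₁ ∧ k₁ < j + ℓ) ∨ (j < k₂ - 1 ∧ k₂ - 1 < j + ℓ)

instance (ℓ k₁ k₂ : ℕ) : DecidablePred (Straddles ℓ k₁ k₂) :=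
  fun _ => inferInstanceAs (Decidable (_ ∨ _))

theorem card_filter_straddles_le (s : Finset ℕ) (ℓ k₁ k₂ : ℕ) :
    (s.filter (Straddles ℓ k₁ k₂)).card ≤ 2 * (ℓ - 1) := by
  set left := Finset.Ico (k₁ + 1 - ℓ) k₁
  set right := Finset.Ico (k₂ - ℓ) (k₂ - 1)
  have hsub : s.filter (Straddles ℓ k₁ k₂) ⊆ left ∪ right := by
    intro j hj
    simp only [Finset.mem_filter, Straddles] at hj
    simp only [left, right, Finset.mem_union, Finset.mem_Ico]
    omega
  calc (s.filter (Straddles ℓ k₁ k₂)).card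
      ≤ (left ∪ right).card := Finset.card_le_card hsub
    _ ≤ left.card + right.card := Finset.card_union_le _ _
    _ ≤ 2 * (ℓ - 1) := by simp only [left, right, Nat.card_Ico]; omega

theorem pairShift_add {ℓ j t : ℕ} (hj : ¬Straddles ℓ k₁ k₂ j) (ht : t < ℓ) :
    pairShift k₁ k₂ (j + t) = pairShift k₁ k₂ j + t := by
  unfold Straddles at hj
  unfold pairShift
  split_ifs <;> omega

theorem exists_pairShift_eq {ℓ n i : ℕ} (hℓ : 0 < ℓ) (h12 : k₁ < k₂) (h2 : k₂ < n)
    (hi : i + ℓ ≤ n)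
    (h₁ : ¬(i ≤ k₁ ∧ k₁ < i + ℓ)) (h₂ : ¬(i ≤ k₂ ∧ k₂ < i + ℓ)) :
    ∃ j, ¬Straddles ℓ k₁ k₂ j ∧ pairShift k₁ k₂ j = i ∧ j + ℓ ≤ n - 2 := by
  unfold Straddles pairShift
  rcases (by omega : i + ℓ ≤ k₁ ∨ (k₁ < i ∧ i + ℓ ≤ k₂) ∨ k₂ < i) with h | h | h
  · exact ⟨i, by omega, by split_ifs <;> omega, by omega⟩
  · exact ⟨i - 1, by omega, by split_ifs <;> omega, by omega⟩
  · exact ⟨i - 2, by omega, by split_ifs <;> omega, by omega⟩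

theorem occursAt_deleteIdxs_pair_iff {w x : List Bool} {j : ℕ} (h12 : k₁ < k₂)
    (h2 : k₂ < x.length) (hj : ¬Straddles w.length k₁ k₂ j) (hjx : j + w.length ≤ x.length - 2) :
    occursAt w (deleteIdxs x {k₁, k₂}) j ↔ occursAt w x (pairShift k₁ k₂ j) := by
  simp only [occursAt_iff_getD, length_deleteIdxs_pair h12 h2]
  have := pairShift_le k₁ k₂ j
  constructor
  · rintro ⟨-, h⟩
    refine ⟨by omega, fun t ht => ?_⟩
    rw [← pairShift_add hj ht, ← getD_deleteIdxs_pair h12 h2 (by omega), h t ht]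
  · rintro ⟨-, h⟩
    refine ⟨by omega, fun t ht => ?_⟩
    rw [getD_deleteIdxs_pair h12 h2 (by omega), pairShift_add hj ht, h t ht]

end PairDeletion

section Counting

variable {w x : List Bool} {k₁ k₂ : ℕ}

theorem Nw_deleteIdxs_pair (hw : w ≠ []) (h12 : k₁ < k₂) (h2 : k₂ < x.length)
    (hfree : ∀ i, occursAt w x i → ∀ k ∈ ({k₁, k₂} : Finset ℕ), ¬(i ≤ k ∧ k < i + w.length)) :
    Nw w (deleteIdxs x {k₁, k₂}) = Nw w x +
      ((occurrences w (deleteIdxs x {k₁, k₂})).filter (Straddles w.length k₁ k₂)).card := by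
  rw [Nw_eq_card_occurrences, Nw_eq_card_occurrences,
    ← Finset.card_filter_add_card_filter_not (Straddles w.length k₁ k₂), add_comm]
  congr 1
  have hℓ := List.length_pos_iff.2 hw
  refine Finset.card_bij (fun j _ => pairShift k₁ k₂ j) (fun j hj => ?_)
    (fun a _ b _ h => pairShift_injective k₁ k₂ h) (fun i hi => ?_)
  · rw [Finset.mem_filter, mem_occurrences hw] at hj
    have hjx := (occursAt_iff_getD.1 hj.1).1
    rw [length_deleteIdxs_pair h12 h2] at hjx
    exact (mem_occurrences hw).2 ((occursAt_deleteIdxs_pair_iff h12 h2 hj.2 (by omega)).1 hj.1)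
  · rw [mem_occurrences hw] at hi
    have hix := (occursAt_iff_getD.1 hi).1
    obtain ⟨j, hj, rfl, hjx⟩ := exists_pairShift_eq hℓ h12 h2 (by omega)
      (hfree _ hi k₁ (by simp)) (hfree _ hi k₂ (by simp))
    refine ⟨j, Finset.mem_filter.2 ⟨(mem_occurrences hw).2 ?_, hj⟩, rfl⟩
    exact (occursAt_deleteIdxs_pair_iff h12 h2 hj hjx).2 hi

theorem preserved_deleteIdxs_pair (h12 : k₁ < k₂) (h2 : k₂ < x.length)
    (hfree : ∀ i, occursAt w x i → ∀ k ∈ ({k₁, k₂} : Finset ℕ), ¬(i ≤ k ∧ k < i + w.length))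
    (hjunc : ∀ j, occursAt w (deleteIdxs x {k₁, k₂}) j → ¬Straddles w.length k₁ k₂ j) :
    Preserved w x (deleteIdxs x {k₁, k₂}) := by
  refine ⟨{k₁, k₂}, fun k hk => ?_, ?_, rfl, hfree, fun j hj k hk => ?_⟩
  · simp only [Finset.mem_insert, Finset.mem_singleton] at hk
    omega
  · rw [Finset.card_pair h12.ne, length_deleteIdxs_pair h12 h2]
    omega
  · have := hjunc j hj
    unfold Straddles at this
    simp only [Finset.mem_insert, Finset.mem_singleton] at hk
    rcases hk with rfl | rfl
    · rw [junction_pair_left h12]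
      omega
    · rw [junction_pair_right h12]
      omega

theorem preserved_deleteIdxs_pair_of_modEq (hw : w ≠ []) (h12 : k₁ < k₂) (h2 : k₂ < x.length)
    (hfree : ∀ i, occursAt w x i → ∀ k ∈ ({k₁, k₂} : Finset ℕ), ¬(i ≤ k ∧ k < i + w.length))
    (hmod : Nw w x ≡ Nw w (deleteIdxs x {k₁, k₂}) [MOD 2 * w.length - 1]) :
    Preserved w x (deleteIdxs x {k₁, k₂}) := by
  set straddling := (occurrences w (deleteIdxs x {k₁, k₂})).filter (Straddles w.length k₁ k₂)
  have hcount : Nw w (deleteIdxs x {k₁, k₂}) = Nw w x + straddling.card :=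
    Nw_deleteIdxs_pair hw h12 h2 hfree
  have hsmall : straddling.card < 2 * w.length - 1 := by
    have : straddling.card ≤ 2 * (w.length - 1) := card_filter_straddles_le _ _ _ _
    have := List.length_pos_iff.2 hw
    omega
  have hdvd : 2 * w.length - 1 ∣ straddling.card := by
    rw [← Nat.modEq_zero_iff_dvd]
    refine (Nat.ModEq.add_left_cancel' (Nw w x) ?_).symm
    rwa [add_zero, ← hcount]
  have hnone : straddling = ∅ := Finset.card_eq_zero.1 (Nat.eq_zero_of_dvd_of_lt hdvd hsmall)
  refine preserved_deleteIdxs_pair h12 h2 hfree fun j hj hs => ?_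
  exact Finset.filter_eq_empty_iff.1 hnone ((mem_occurrences hw).2 hj) hs

end Counting

/-- If two ones are deleted and `N₀₀₀₀(x) ≡ N₀₀₀₀(y) (mod 7)`, then `0000` is preserved. -/
theorem two_ones_0000_preserved (x y : List Bool) (k₁ k₂ : ℕ)
    (h12 : k₁ < k₂) (h2 : k₂ < x.length)
    (hv1 : x.getD k₁ false = true) (hv2 : x.getD k₂ false = true)
    (hy : y = deleteIdxs x ({k₁, k₂} : Finset ℕ))
    (hmod : Nw w0000 x ≡ Nw w0000 y [MOD 7]) :
    Preserved w0000 x y := by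
  subst hy
  refine preserved_deleteIdxs_pair_of_modEq (List.cons_ne_nil _ _) h12 h2 ?_ hmod
  rintro i hi k hk ⟨hik, hki⟩
  have hone : x.getD k false = true := by
    simp only [Finset.mem_insert, Finset.mem_singleton] at hk
    rcases hk with rfl | rfl <;> assumption
  rw [getD_eq_false_of_occursAt_replicate (ℓ := 4) hi hik hki] at hone
  exact Bool.false_ne_true hone
end

section
/- Let y be obtained from a binary string x by deleting one symbol equal to 0 and one symbol equal to 1. Then it is impossible that both N_{0000}(y) − N_{0000}(x) mod 7 ∈ {1,2,3} and N_{1111}(x) − N_{1111}(y) mod 7 ∈ {1,2,3} hold. -/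
/-!
Delete the `0` first and then the `1`, one symbol at a time. Deleting position `b` of `u`
changes the number of occurrences of a word `w` by the number of occurrences in the new string
that straddle the junction, minus the number of occurrences in `u` that cover `b`. For `w = cⁿ`
this shows that deleting a `c` loses at most one occurrence and creates none, while deleting
another symbol loses none and creates at most `n - 1`. Hence `N₀₀₀₀(y) - N₀₀₀₀(x) ∈ [-1, 3]` and
`N₁₁₁₁(x) - N₁₁₁₁(y) ∈ [-3, 1]`, and the two congruences force the deletion of the `1` both to
create a `0000` and to destroy a `1111`. The former needs both neighbours of the deleted `1` to
be `0`, the latter needs one of them to be `1`.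
-/

open Finset

theorem List.idxOf_filter_range {p : ℕ → Bool} {a n : ℕ} (ha : a < n) (hp : p a) :
    ((List.range n).filter p).idxOf a = ((List.range a).filter p).length := by
  obtain ⟨m, rfl⟩ := Nat.exists_eq_add_of_lt ha
  rw [show a + m + 1 = a + (m + 1) by omega, List.range_add, List.filter_append,
    List.idxOf_append, if_neg (by simp), List.range_succ_eq_map]
  simp [hp]

theorem filter_range_notMem_insert {a n : ℕ} {S : Finset ℕ} (ha : a ∉ S) :
    (List.range n).filter (fun i => decide (i ∉ insert a S)) =
      ((List.range n).filter (fun i => decide (i ∉ S))).erase a := by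
  rw [List.Nodup.erase_eq_filter (List.nodup_range.filter _), List.filter_filter]
  congr 1
  ext i
  by_cases h : i = a <;> simp [h, ha]

section Deletion

variable {x : List Bool} {a b : ℕ} {S : Finset ℕ}

theorem deleteIdxs_empty (x : List Bool) : deleteIdxs x ∅ = x := by
  apply List.ext_getElem (by simp [deleteIdxs])
  intro i _ hi
  simp [deleteIdxs, hi]

theorem deleteIdxs_insert (ha : a ∉ S) (hax : a < x.length) :
    deleteIdxs x (insert a S) = (deleteIdxs x S).eraseIdx (junction S a) := by
  rw [deleteIdxs, deleteIdxs, List.eraseIdx_map, filter_range_notMem_insert ha,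
    ← List.eraseIdx_idxOf_eq_erase, List.idxOf_filter_range hax (by simpa using ha)]
  rfl

theorem getElem?_deleteIdxs_junction (ha : a ∉ S) (hax : a < x.length) :
    (deleteIdxs x S)[junction S a]? = x[a]? := by
  have hmem : a ∈ (List.range x.length).filter (fun i => decide (i ∉ S)) := by simp [ha, hax]
  have hidx : junction S a = ((List.range x.length).filter (fun i => decide (i ∉ S))).idxOf a :=
    (List.idxOf_filter_range hax (by simpa using ha)).symm
  rw [deleteIdxs, List.getElem?_map, hidx, List.getElem?_idxOf hmem]
  simp [hax]

theorem deleteIdxs_singleton_s13 (ha : a < x.length) : deleteIdxs x {a} = x.eraseIdx a := by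
  rw [← insert_empty, deleteIdxs_insert (notMem_empty a) ha, deleteIdxs_empty]
  congr 1
  simp [junction]

theorem deleteIdxs_pair (hab : a ≠ b) (ha : a < x.length) (hb : b < x.length) :
    deleteIdxs x {a, b} = (x.eraseIdx a).eraseIdx (junction {a} b) := by
  rw [pair_comm, deleteIdxs_insert (by simpa using hab.symm) hb, deleteIdxs_singleton_s13 ha]

theorem getElem?_eraseIdx_junction (hab : a ≠ b) (ha : a < x.length) (hb : b < x.length) :
    (x.eraseIdx a)[junction {a} b]? = x[b]? := by
  rw [← deleteIdxs_singleton_s13 ha, getElem?_deleteIdxs_junction (by simpa using hab.symm) hb]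

theorem getElem?_eq_some_of_getD_eq {c : Bool} (ha : a < x.length) (hv : x.getD a false = c) :
    x[a]? = some c := by
  rw [List.getElem?_eq_getElem ha, ← hv, List.getD_eq_getElem]

end Deletion

section Occurrences

variable {α : Type*} [DecidableEq α] {w u x : List α} {b i j n : ℕ} {c d s : α}

def occ (w x : List α) : Finset ℕ :=
  (range x.length).filter (fun i => w <+: x.drop i)

theorem Nw_eq_card_occ (w x : List Bool) : Nw w x = #(occ w x) := rfl

theorem mem_occ_iff (hw : w ≠ []) : i ∈ occ w x ↔ ∀ t < w.length, x[i + t]? = w[t]? := by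
  simp only [occ, mem_filter, mem_range, List.prefix_iff_getElem?, List.getElem?_drop]
  constructor
  · rintro ⟨-, h⟩ t ht
    rw [h t ht, List.getElem?_eq_getElem ht]
  · intro h
    have h0 := h 0 (List.length_pos_iff.mpr hw)
    refine ⟨?_, fun t ht => by rw [h t ht, List.getElem?_eq_getElem ht]⟩
    by_contra hi
    rw [add_zero, List.getElem?_eq_none (by omega), eq_comm, List.getElem?_eq_none_iff] at h0
    exact hw (List.length_eq_zero_iff.mp (by omega))

theorem mem_occ_eraseIdx_of_add_le (hw : w ≠ []) (h : j + w.length ≤ b) :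
    j ∈ occ w (u.eraseIdx b) ↔ j ∈ occ w u := by
  simp only [mem_occ_iff hw, List.getElem?_eraseIdx]
  refine forall₂_congr fun t ht => ?_
  rw [if_pos (by omega)]

theorem mem_occ_eraseIdx_of_le (hw : w ≠ []) (h : b ≤ j) :
    j ∈ occ w (u.eraseIdx b) ↔ j + 1 ∈ occ w u := by
  simp only [mem_occ_iff hw, List.getElem?_eraseIdx]
  refine forall₂_congr fun t ht => ?_
  rw [if_neg (by omega), Nat.add_right_comm]

def covering (w x : List α) (b : ℕ) : Finset ℕ :=
  (occ w x).filter (fun i => i ≤ b ∧ b < i + w.length)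

def straddling (w x : List α) (b : ℕ) : Finset ℕ :=
  (occ w x).filter (fun j => j < b ∧ b < j + w.length)

theorem card_straddling_le : #(straddling w x b) ≤ w.length - 1 := by
  calc #(straddling w x b) ≤ #(Ico (b + 1 - w.length) b) := by
        apply card_le_card
        intro j hj
        simp only [straddling, mem_filter, mem_Ico] at hj ⊢
        omega
    _ ≤ w.length - 1 := by rw [Nat.card_Ico]; omega

theorem card_occ_add_card_straddling_eraseIdx (hw : w ≠ []) :
    #(occ w u) + #(straddling w (u.eraseIdx b) b) =
      #(occ w (u.eraseIdx b)) + #(covering w u b) := by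
  have hw' : 0 < w.length := List.length_pos_iff.mpr hw
  have hbij : #((occ w u).filter (fun i => ¬ (i ≤ b ∧ b < i + w.length))) =
      #((occ w (u.eraseIdx b)).filter (fun j => ¬ (j < b ∧ b < j + w.length))) := by
    apply card_nbij' (fun i => if i < b then i else i - 1) (fun j => if j < b then j else j + 1)
    · intro i hi
      simp only [coe_filter, Set.mem_ofPred_eq] at hi ⊢
      split_ifs with hib
      · exact ⟨(mem_occ_eraseIdx_of_add_le hw (by omega)).mpr hi.1, by omega⟩
      · refine ⟨(mem_occ_eraseIdx_of_le hw (by omega)).mpr ?_, by omega⟩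
        rw [Nat.sub_add_cancel (by omega)]
        exact hi.1
    · intro j hj
      simp only [coe_filter, Set.mem_ofPred_eq] at hj ⊢
      split_ifs with hjb
      · exact ⟨(mem_occ_eraseIdx_of_add_le hw (by omega)).mp hj.1, by omega⟩
      · exact ⟨(mem_occ_eraseIdx_of_le hw (by omega)).mp hj.1, by omega⟩
    · intro i hi
      simp only [coe_filter, Set.mem_ofPred_eq] at hi
      simp only
      split_ifs <;> omega
    · intro j hj
      simp only [coe_filter, Set.mem_ofPred_eq] at hj
      simp only
      split_ifs <;> omega
  have hu := card_filter_add_card_filter_not (s := occ w u) (fun i => i ≤ b ∧ b < i + w.length)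
  have hv := card_filter_add_card_filter_not (s := occ w (u.eraseIdx b))
    (fun j => j < b ∧ b < j + w.length)
  rw [covering, straddling]
  omega

theorem mem_occ_replicate_iff (hn : n ≠ 0) :
    i ∈ occ (List.replicate n c) x ↔ ∀ t < n, x[i + t]? = some c := by
  rw [mem_occ_iff (by simpa using hn), List.length_replicate]
  refine forall₂_congr fun t ht => ?_
  rw [List.getElem?_replicate, if_pos ht]

theorem covering_replicate_eq_empty (hs : u[b]? = some s) (hsc : s ≠ c) :
    covering (List.replicate n c) u b = ∅ := by
  refine eq_empty_of_forall_notMem fun i hi => hsc ?_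
  simp only [covering, mem_filter, List.length_replicate] at hi
  have := (mem_occ_replicate_iff (by omega)).mp hi.1 (b - i) (by omega)
  rw [Nat.add_sub_cancel' hi.2.1, hs] at this
  exact Option.some_injective _ this

theorem straddling_replicate_eraseIdx_subset (hb : u[b]? = some c) :
    straddling (List.replicate n c) (u.eraseIdx b) b ⊆ covering (List.replicate n c) u b := by
  intro j hj
  simp only [straddling, covering, mem_filter, List.length_replicate] at hj ⊢
  obtain ⟨hocc, hjb, hbj⟩ := hj
  have hv := (mem_occ_replicate_iff (by omega)).mp hocc
  refine ⟨(mem_occ_replicate_iff (by omega)).mpr fun t ht => ?_, by omega, hbj⟩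
  rcases lt_trichotomy (j + t) b with h | h | h
  · simpa [List.getElem?_eraseIdx, h] using hv t ht
  · rwa [h]
  · have := hv (t - 1) (by omega)
    rwa [List.getElem?_eraseIdx, if_neg (by omega), show j + (t - 1) + 1 = j + t by omega] at this

theorem card_covering_replicate_le :
    #(covering (List.replicate n c) u b) ≤
      #(straddling (List.replicate n c) (u.eraseIdx b) b) + 1 := by
  rcases (covering (List.replicate n c) u b).eq_empty_or_nonempty with hempty | hne
  · simp [hempty]
  set m := (covering (List.replicate n c) u b).max' hne
  have hm : m ∈ covering (List.replicate n c) u b := max'_mem _ _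
  simp only [covering, mem_filter, List.length_replicate] at hm
  have hmc := (mem_occ_replicate_iff (by omega)).mp hm.1
  -- A covering occurrence other than the last one survives the deletion: the symbol that
  -- slides into its window still lies in the window of the last one.
  have hsub : covering (List.replicate n c) u b ⊆
      insert m (straddling (List.replicate n c) (u.eraseIdx b) b) := by
    intro i hi
    have him : i ≤ m := le_max' _ _ hi
    simp only [covering, mem_filter, List.length_replicate] at hi
    rcases him.lt_or_eq with him | rfl
    · refine mem_insert_of_mem ?_
      simp only [straddling, mem_filter, List.length_replicate]
      refine ⟨(mem_occ_replicate_iff (by omega)).mpr fun t ht => ?_, by omega, hi.2.2⟩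
      rw [List.getElem?_eraseIdx]
      split_ifs with h
      · exact (mem_occ_replicate_iff (by omega)).mp hi.1 t ht
      · have := hmc (i + t + 1 - m) (by omega)
        rwa [Nat.add_sub_cancel' (by omega)] at this
    · exact mem_insert_self _ _
  exact (card_le_card hsub).trans (card_insert_le _ _)

theorem card_occ_replicate_eraseIdx_of_ne (hn : n ≠ 0) (hs : u[b]? = some s) (hsc : s ≠ c) :
    #(occ (List.replicate n c) u) ≤ #(occ (List.replicate n c) (u.eraseIdx b)) ∧
      #(occ (List.replicate n c) (u.eraseIdx b)) ≤ #(occ (List.replicate n c) u) + (n - 1) := by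
  have key := card_occ_add_card_straddling_eraseIdx (w := List.replicate n c) (u := u) (b := b)
    (by simpa using hn)
  have hS := card_straddling_le (w := List.replicate n c) (x := u.eraseIdx b) (b := b)
  rw [covering_replicate_eq_empty hs hsc, List.length_replicate] at *
  simp only [card_empty] at key
  omega

theorem card_occ_replicate_eraseIdx_self (hn : n ≠ 0) (hs : u[b]? = some c) :
    #(occ (List.replicate n c) (u.eraseIdx b)) ≤ #(occ (List.replicate n c) u) ∧
      #(occ (List.replicate n c) u) ≤ #(occ (List.replicate n c) (u.eraseIdx b)) + 1 := by
  have key := card_occ_add_card_straddling_eraseIdx (w := List.replicate n c) (u := u) (b := b)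
    (by simpa using hn)
  have hSC := card_le_card (straddling_replicate_eraseIdx_subset (n := n) hs)
  have hCS := card_covering_replicate_le (n := n) (c := c) (u := u) (b := b)
  omega

theorem neighbours_of_mem_straddling_replicate
    (hj : j ∈ straddling (List.replicate n c) (u.eraseIdx b) b) :
    u[b - 1]? = some c ∧ u[b + 1]? = some c := by
  simp only [straddling, mem_filter, List.length_replicate] at hj
  have hv := (mem_occ_replicate_iff (by omega)).mp hj.1
  have hl := hv (b - 1 - j) (by omega)
  have hr := hv (b - j) (by omega)
  rw [List.getElem?_eraseIdx, if_pos (by omega), Nat.add_sub_cancel' (by omega)] at hl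
  rw [List.getElem?_eraseIdx, if_neg (by omega), Nat.add_sub_cancel' (by omega)] at hr
  exact ⟨hl, hr⟩

theorem neighbour_of_mem_covering_replicate (hn : 2 ≤ n)
    (hi : i ∈ covering (List.replicate n c) u b) :
    u[b - 1]? = some c ∨ u[b + 1]? = some c := by
  simp only [covering, mem_filter, List.length_replicate] at hi
  have hv := (mem_occ_replicate_iff (by omega)).mp hi.1
  rcases hi.2.1.lt_or_eq with hib | rfl
  · left
    simpa [Nat.add_sub_cancel' (show i ≤ b - 1 by omega)] using hv (b - 1 - i) (by omega)
  · exact Or.inr (hv 1 (by omega))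

theorem card_occ_replicate_le_eraseIdx_of_lt (hn : 2 ≤ n) (hcd : c ≠ d)
    (hgain : #(occ (List.replicate n c) u) < #(occ (List.replicate n c) (u.eraseIdx b))) :
    #(occ (List.replicate n d) u) ≤ #(occ (List.replicate n d) (u.eraseIdx b)) := by
  have hc := card_occ_add_card_straddling_eraseIdx (w := List.replicate n c) (u := u) (b := b)
    (by simp; omega)
  have hd := card_occ_add_card_straddling_eraseIdx (w := List.replicate n d) (u := u) (b := b)
    (by simp; omega)
  obtain ⟨j, hj⟩ : (straddling (List.replicate n c) (u.eraseIdx b) b).Nonempty := by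
    rw [← card_pos]; omega
  have hempty : covering (List.replicate n d) u b = ∅ := by
    refine eq_empty_of_forall_notMem fun i hi => ?_
    obtain ⟨hl, hr⟩ := neighbours_of_mem_straddling_replicate hj
    rcases neighbour_of_mem_covering_replicate hn hi with h | h
    · exact hcd (Option.some_injective _ (hl.symm.trans h))
    · exact hcd (Option.some_injective _ (hr.symm.trans h))
  rw [hempty, card_empty] at hd
  omega

end Occurrences

/-- When a `0` and a `1` are deleted, it is impossible that both
`(N₀₀₀₀(y) - N₀₀₀₀(x)) mod 7 ∈ {1,2,3}` and `(N₁₁₁₁(x) - N₁₁₁₁(y)) mod 7 ∈ {1,2,3}`. -/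
theorem impossible_mod_combination (x y : List Bool) (k₀ k₁ : ℕ) (hne : k₀ ≠ k₁)
    (h0 : k₀ < x.length) (h1 : k₁ < x.length)
    (hv0 : x.getD k₀ false = false) (hv1 : x.getD k₁ false = true)
    (hy : y = deleteIdxs x ({k₀, k₁} : Finset ℕ)) :
    ¬ ((((Nw w0000 y : ℤ) - (Nw w0000 x : ℤ)) % 7 ∈ ({1, 2, 3} : Set ℤ)) ∧
       (((Nw w1111 x : ℤ) - (Nw w1111 y : ℤ)) % 7 ∈ ({1, 2, 3} : Set ℤ))) := by
  have hyz : y = (x.eraseIdx k₀).eraseIdx (junction {k₀} k₁) :=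
    hy.trans (deleteIdxs_pair hne h0 h1)
  have hx : x[k₀]? = some false := getElem?_eq_some_of_getD_eq h0 hv0
  have hz : (x.eraseIdx k₀)[junction {k₀} k₁]? = some true := by
    rw [getElem?_eraseIdx_junction hne h0 h1, getElem?_eq_some_of_getD_eq h1 hv1]
  obtain ⟨hz0, hx0⟩ := card_occ_replicate_eraseIdx_self (n := 4) (by norm_num) hx
  obtain ⟨hx1, hz1⟩ :=
    card_occ_replicate_eraseIdx_of_ne (n := 4) (c := true) (by norm_num) hx (by decide)
  obtain ⟨hy0, hy0'⟩ :=
    card_occ_replicate_eraseIdx_of_ne (n := 4) (c := false) (by norm_num) hz (by decide)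
  obtain ⟨hy1, hy1'⟩ := card_occ_replicate_eraseIdx_self (n := 4) (by norm_num) hz
  have hkey := card_occ_replicate_le_eraseIdx_of_lt (u := x.eraseIdx k₀) (b := junction {k₀} k₁)
    (n := 4) (c := false) (d := true) (by norm_num) (by decide)
  have hw0 : w0000 = List.replicate 4 false := rfl
  have hw1 : w1111 = List.replicate 4 true := rfl
  simp only [hyz, hw0, hw1, Nw_eq_card_occ, Set.mem_insert_iff, Set.mem_singleton_iff]
  omega
end
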